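/- For any Delannoy path W in Del(n+1,n-1,l) (which has more E's than N's, so its minimum depth is negative), replacing the step immediately after the last position achieving maximal depth (that step is necessarily an E) with an N yields a bad path in Del(n,n,l), and this operation is inverse to the map that replaces the first deepest step of a bad path in Del(n,n,l) with an E. -/

import Mathlib

inductive Step : Type
  | E | D | N
deriving DecidableEq

instance instFintypeStep : Fintype Step :=
  ⟨{Step.E, Step.D, Step.N}, by intro x; cases x <;> simp⟩

open Step Polynomial

/-- All words of length `l` over the step alphabet. -/
def Words (l : ℕ) : Finset (List Step) :=
  (Finset.univ : Finset (Fin l → Step)).image List.ofFn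

/-- Delannoy paths from (0,0) to (m,n) with `l` steps, encoded as words:
`#E + #D = m`, `#N + #D = n`, length `l`. -/
def DelSet (m n l : ℕ) : Finset (List Step) :=
  (Words l).filter fun w => w.count E + w.count D = m ∧ w.count N + w.count D = n

/-- A word is bad if some prefix contains more N's than E's. -/
def bad (w : List Step) : Bool :=
  (List.range (w.length + 1)).any fun k => (w.take k).count E < (w.take k).count N

/-- Bad Delannoy paths from (0,0) to (n,n) with `l` steps. -/
def BDelSet (n l : ℕ) : Finset (List Step) :=
  (DelSet n n l).filter fun w => bad w

/-- Schröder paths: Delannoy paths to (n,n) never going above the diagonal. -/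
def SchSet (n l : ℕ) : Finset (List Step) :=
  (DelSet n n l).filter fun w => ¬ bad w

/-- Major index of a word w_1 ⋯ w_l with respect to a ranking of the letters:
the sum of all positions i (1 ≤ i ≤ l-1) with w_i > w_{i+1}. -/
def maj (rank : Step → ℕ) (w : List Step) : ℕ :=
  ∑ i ∈ Finset.range (w.length - 1),
    if rank (w.getD (i + 1) E) < rank (w.getD i E) then i + 1 else 0

/-- q-integer [m] = 1 + q + ⋯ + q^{m-1}. -/
noncomputable def qint (m : ℕ) : Polynomial ℚ :=
  ∑ i ∈ Finset.range m, X ^ i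

/-- q-factorial. -/
noncomputable def qfact : ℕ → Polynomial ℚ
  | 0 => 1
  | m + 1 => qfact m * qint (m + 1)

/-- Gaussian binomial coefficient, via the q-Pascal recurrence. -/
noncomputable def qbinom : ℕ → ℕ → Polynomial ℚ
  | _, 0 => 1
  | 0, _ + 1 => 0
  | m + 1, k + 1 => qbinom m k + X ^ (k + 1) * qbinom m (k + 1)

/-- q-trinomial coefficient [l]!/([a]![b]![c]!), defined when a+b+c = l. -/
noncomputable def qbinom3 (l a b c : ℕ) : Polynomial ℚ :=
  if a + b + c = l then qbinom l a * qbinom (l - a) b else 0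

/-- Depth after the first `i` steps: #N − #E. -/
def depth (w : List Step) (i : ℕ) : ℤ :=
  ((w.take i).count N : ℤ) - (w.take i).count E

/-- `k` (0 ≤ k ≤ l) achieves the maximal running depth. -/
def isMaxDepth (w : List Step) (k : ℕ) : Bool :=
  (List.range (w.length + 1)).all fun i => decide (depth w i ≤ depth w k)

/-- The first index (number of steps) at which the running depth is maximal. -/
def firstDeep (w : List Step) : ℕ :=
  (List.range (w.length + 1)).findIdx (isMaxDepth w)

/-- The last index at which the running depth is maximal. -/
def lastDeep (w : List Step) : ℕ :=
  w.length - (List.range (w.length + 1)).reverse.findIdx (isMaxDepth w)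

/-- Replace the first deepest step (the step w_k, k = firstDeep) with E. -/
def phi (w : List Step) : List Step := w.set (firstDeep w - 1) E

/-- Replace the step following the last deepest point with N. -/
def phiInv (w : List Step) : List Step := w.set (lastDeep w) N

/-- Number of consecutive D's immediately after the first deepest step. -/
def runS (w : List Step) : ℕ := ((w.drop (firstDeep w)).takeWhile (· == D)).length

/-- Number of consecutive D's immediately before the first deepest step. -/
def runR (w : List Step) : ℕ :=
  ((w.take (firstDeep w - 1)).reverse.takeWhile (· == D)).length

/-- The window map: replace W₁ = D^r w_k D^s by D^{r-1} E D^{s+1} if r ≥ 1,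
and by D^s E if r = 0. -/
def phiWin (w : List Step) : List Step :=
  let k := firstDeep w - 1
  let r := runR w
  let s := runS w
  let seg : List Step :=
    if 1 ≤ r then List.replicate (r - 1) D ++ [E] ++ List.replicate (s + 1) D
    else List.replicate s D ++ [E]
  w.take (k - r) ++ seg ++ w.drop (k + s + 1)

/-- 0-based index of the first step after which the path is above the diagonal. -/
def firstAbove (w : List Step) : ℕ :=
  (List.range w.length).findIdx fun i =>
    decide ((w.take (i + 1)).count E < (w.take (i + 1)).count N)

/-- The map ψ of Bonin–Shapiro–Simion: replace with E the last N of the maximal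
run of consecutive N's beginning at the first step going above the diagonal. -/
def psi (w : List Step) : List Step :=
  let i := firstAbove w
  let j := i + ((w.drop i).takeWhile (· == N)).length - 1
  w.set j E

/-! The step after the last deepest point `k` of a path ending at negative depth is an `E`; turning
it into an `N` raises every later depth by `2`, so the new path reaches depth `depth k + 1` at
`k + 1` for the first time and is bad. Conversely, turning the first deepest step (an `N`) of a bad
path into an `E` lowers every later depth by `2`, which makes the point just before it the last
deepest one. In each case the new extremal point sits exactly at the modified step, so the two
maps undo each other. -/

namespace Step

def rise : Step → ℤ
  | E => -1
  | D => 0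
  | N => 1

lemma count_N_sub_count_E (u : List Step) :
    (u.count N : ℤ) - u.count E = (u.map rise).sum := by
  induction u with
  | nil => simp
  | cons s u ih => cases s <;> simp [rise] <;> omega

end Step

open Step

section Depth

variable {w : List Step}

lemma depth_eq_sum (w : List Step) (i : ℕ) : depth w i = ((w.take i).map rise).sum :=
  count_N_sub_count_E _

@[simp] lemma depth_zero (w : List Step) : depth w 0 = 0 := by simp [depth]

lemma depth_length (w : List Step) : depth w w.length = (w.count N : ℤ) - w.count E := by
  simp [depth]

lemma depth_succ {i : ℕ} (h : i < w.length) : depth w (i + 1) = depth w i + rise w[i] := by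
  rw [depth_eq_sum, depth_eq_sum, List.take_add_one, List.getElem?_eq_getElem h]
  simp only [Option.toList_some, List.map_append, List.sum_append, List.map_cons, List.map_nil,
    List.sum_cons, List.sum_nil, add_zero]

lemma depth_set {j : ℕ} (hj : j < w.length) (c : Step) (i : ℕ) :
    depth (w.set j c) i = depth w i + if j < i then rise c - rise w[j] else 0 := by
  rw [depth_eq_sum, depth_eq_sum, List.take_set, List.map_set, List.sum_set']
  by_cases hji : j < i
  · simp only [List.map_take, List.length_take, List.length_map, lt_inf_iff, hji, hj, and_self,
      ↓reduceDIte, List.getElem_take, List.getElem_map, ↓reduceIte, add_right_inj]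
    ring
  · simp [hji]

lemma getElem_eq_N_of_depth_lt {i : ℕ} (h : i < w.length) (hlt : depth w i < depth w (i + 1)) :
    w[i] = N := by
  rw [depth_succ h] at hlt
  cases hs : w[i] <;> simp_all [rise]

lemma getElem_eq_E_of_depth_lt {i : ℕ} (h : i < w.length) (hlt : depth w (i + 1) < depth w i) :
    w[i] = E := by
  rw [depth_succ h] at hlt
  cases hs : w[i] <;> simp_all [rise]

lemma bad_iff_exists_depth_pos : bad w = true ↔ ∃ k ≤ w.length, 0 < depth w k := by
  simp only [bad, List.any_eq_true, List.mem_range, Nat.lt_succ_iff, decide_eq_true_eq, depth,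
    sub_pos, Nat.cast_lt]

lemma isMaxDepth_iff {k : ℕ} :
    isMaxDepth w k = true ↔ ∀ i ≤ w.length, depth w i ≤ depth w k := by
  simp [isMaxDepth]

lemma exists_isMaxDepth : ∃ k ∈ List.range (w.length + 1), isMaxDepth w k = true := by
  obtain ⟨k, hk, hmax⟩ := Finset.exists_max_image (Finset.range (w.length + 1)) (depth w)
    ⟨0, by simp⟩
  refine ⟨k, by simpa using hk, isMaxDepth_iff.2 fun i hi => hmax i ?_⟩
  simpa [Nat.lt_succ_iff] using hi

end Depth

section FirstDeep

variable {w : List Step}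

lemma firstDeep_le_length : firstDeep w ≤ w.length := by
  have := List.findIdx_lt_length_of_exists (exists_isMaxDepth (w := w))
  rw [List.length_range] at this
  exact Nat.lt_succ_iff.1 this

lemma le_depth_firstDeep {i : ℕ} (hi : i ≤ w.length) : depth w i ≤ depth w (firstDeep w) := by
  have := List.findIdx_getElem (w := List.findIdx_lt_length_of_exists (exists_isMaxDepth (w := w)))
  rw [List.getElem_range] at this
  exact isMaxDepth_iff.1 this i hi

lemma depth_lt_depth_firstDeep {i : ℕ} (hi : i < firstDeep w) :
    depth w i < depth w (firstDeep w) := by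
  have hnot := List.not_of_lt_findIdx hi
  rw [List.getElem_range] at hnot
  by_contra! hle
  have : isMaxDepth w i = true :=
    isMaxDepth_iff.2 fun j hj => (le_depth_firstDeep hj).trans hle
  simp_all

lemma firstDeep_eq {k : ℕ} (hk : k ≤ w.length) (hmax : ∀ i ≤ w.length, depth w i ≤ depth w k)
    (hlt : ∀ i < k, depth w i < depth w k) : firstDeep w = k := by
  rcases lt_trichotomy (firstDeep w) k with h | h | h
  · exact absurd (le_depth_firstDeep hk) (not_le.2 (hlt _ h))
  · exact h
  · exact absurd (hmax _ firstDeep_le_length) (not_le.2 (depth_lt_depth_firstDeep h))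

lemma bad_iff_firstDeep_pos : bad w = true ↔ 0 < firstDeep w := by
  rw [bad_iff_exists_depth_pos]
  constructor
  · rintro ⟨k, hk, hpos⟩
    refine Nat.pos_of_ne_zero fun h0 => ?_
    have := le_depth_firstDeep hk
    rw [h0, depth_zero] at this
    omega
  · intro hpos
    exact ⟨_, firstDeep_le_length, by simpa using depth_lt_depth_firstDeep hpos⟩

lemma lt_length_of_firstDeep_eq_succ {k : ℕ} (hk : firstDeep w = k + 1) : k < w.length := by
  have := firstDeep_le_length (w := w)
  omega

lemma getElem_of_firstDeep_eq_succ {k : ℕ} (hk : firstDeep w = k + 1) :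
    w[k]'(lt_length_of_firstDeep_eq_succ hk) = N :=
  getElem_eq_N_of_depth_lt _ (hk ▸ depth_lt_depth_firstDeep (hk ▸ lt_add_one k))

end FirstDeep

section LastDeep

variable {w : List Step}

lemma getElem_reverse_range {L j : ℕ} (h : j < (List.range (L + 1)).reverse.length) :
    (List.range (L + 1)).reverse[j] = L - j := by
  simp [List.getElem_reverse]

lemma lastDeep_le_length : lastDeep w ≤ w.length := Nat.sub_le _ _

lemma le_depth_lastDeep {i : ℕ} (hi : i ≤ w.length) : depth w i ≤ depth w (lastDeep w) := by
  have hex := List.findIdx_lt_length_of_exists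
    (p := isMaxDepth w) (xs := (List.range (w.length + 1)).reverse)
    (by simpa using exists_isMaxDepth (w := w))
  have := List.findIdx_getElem (w := hex)
  rw [getElem_reverse_range] at this
  exact isMaxDepth_iff.1 this i hi

lemma depth_lt_depth_lastDeep {i : ℕ} (hi : lastDeep w < i) (hi' : i ≤ w.length) :
    depth w i < depth w (lastDeep w) := by
  have hidx : w.length - i < (List.range (w.length + 1)).reverse.findIdx (isMaxDepth w) := by
    unfold lastDeep at hi
    omega
  have hnot := List.not_of_lt_findIdx hidx
  rw [getElem_reverse_range, Nat.sub_sub_self hi'] at hnot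
  by_contra! hle
  have : isMaxDepth w i = true :=
    isMaxDepth_iff.2 fun j hj => (le_depth_lastDeep hj).trans hle
  simp_all

lemma lastDeep_eq {k : ℕ} (hk : k ≤ w.length) (hmax : ∀ i ≤ w.length, depth w i ≤ depth w k)
    (hgt : ∀ i, k < i → i ≤ w.length → depth w i < depth w k) : lastDeep w = k := by
  rcases lt_trichotomy (lastDeep w) k with h | h | h
  · exact absurd (hmax _ lastDeep_le_length) (not_le.2 (depth_lt_depth_lastDeep h hk))
  · exact h
  · exact absurd (le_depth_lastDeep hk) (not_le.2 (hgt _ h lastDeep_le_length))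

lemma lastDeep_lt_length (h : depth w w.length < 0) : lastDeep w < w.length := by
  refine lt_of_le_of_ne lastDeep_le_length fun heq => ?_
  have := le_depth_lastDeep (w := w) (Nat.zero_le _)
  rw [heq, depth_zero] at this
  omega

lemma getElem_lastDeep (h : lastDeep w < w.length) : w[lastDeep w] = E :=
  getElem_eq_E_of_depth_lt h (depth_lt_depth_lastDeep (Nat.lt_succ_self _) h)

end LastDeep

section Inverse

variable {w : List Step}

lemma firstDeep_set_lastDeep {k : ℕ} (hk : lastDeep w = k) (hlen : k < w.length) :
    firstDeep (w.set k N) = k + 1 := by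
  have hle : ∀ i ≤ w.length, depth w i ≤ depth w k := hk ▸ fun i => le_depth_lastDeep
  have hlt : ∀ i, k < i → i ≤ w.length → depth w i < depth w k :=
    hk ▸ fun i => depth_lt_depth_lastDeep
  have hE : w[k] = E := by subst hk; exact getElem_lastDeep hlen
  have hds : ∀ i, depth (w.set k N) i = depth w i + if k < i then 2 else 0 := by
    intro i
    rw [depth_set hlen, hE]
    norm_num [rise]
  have hstep : depth w (k + 1) = depth w k - 1 := by
    rw [depth_succ hlen, hE, rise, sub_eq_add_neg]
  apply firstDeep_eq (by simpa using hlen)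
  · intro i hi
    rw [List.length_set] at hi
    have := hle i hi
    by_cases hki : k < i
    · have := hlt i hki hi
      simp only [hds, hki, if_true, lt_add_one]
      omega
    · simp only [hds, hki, if_false, lt_add_one, if_true]
      omega
  · intro i hi
    have := hle i (by omega)
    simp only [hds, lt_add_one, if_true, show ¬ k < i by omega, if_false]
    omega

lemma lastDeep_set_firstDeep {k : ℕ} (hk : firstDeep w = k + 1) :
    lastDeep (w.set k E) = k := by
  have hlen := lt_length_of_firstDeep_eq_succ hk
  have hle : ∀ i ≤ w.length, depth w i ≤ depth w (k + 1) := hk ▸ fun i => le_depth_firstDeep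
  have hlt : ∀ i < k + 1, depth w i < depth w (k + 1) := hk ▸ fun i => depth_lt_depth_firstDeep
  have hN := getElem_of_firstDeep_eq_succ hk
  have hds : ∀ i, depth (w.set k E) i = depth w i - if k < i then 2 else 0 := by
    intro i
    rw [depth_set hlen, hN]
    split_ifs <;> norm_num [rise, sub_eq_add_neg]
  have hstep : depth w (k + 1) = depth w k + 1 := by
    rw [depth_succ hlen, hN, rise]
  apply lastDeep_eq (by simpa using hlen.le)
  · intro i hi
    rw [List.length_set] at hi
    have := hle i hi
    by_cases hki : k < i
    · simp only [hds, hki, if_true, lt_irrefl, if_false]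
      omega
    · have := hlt i (by omega)
      simp only [hds, hki, if_false, lt_irrefl]
      omega
  · intro i hki hi
    rw [List.length_set] at hi
    have := hle i hi
    simp only [hds, hki, if_true, lt_irrefl, if_false]
    omega

lemma phi_phiInv (h : lastDeep w < w.length) : phi (phiInv w) = w := by
  rw [phiInv, phi, firstDeep_set_lastDeep rfl h, Nat.add_sub_cancel, List.set_set,
    ← getElem_lastDeep h, List.set_getElem_self]

lemma phiInv_phi (h : 0 < firstDeep w) : phiInv (phi w) = w := by
  obtain ⟨k, hk⟩ : ∃ k, firstDeep w = k + 1 := ⟨firstDeep w - 1, by omega⟩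
  rw [phi, phiInv, hk, Nat.add_sub_cancel, lastDeep_set_firstDeep hk, List.set_set,
    ← getElem_of_firstDeep_eq_succ hk, List.set_getElem_self]

end Inverse

lemma mem_Words_iff {w : List Step} {l : ℕ} : w ∈ Words l ↔ w.length = l := by
  constructor
  · intro h
    obtain ⟨f, -, rfl⟩ := Finset.mem_image.1 h
    simp
  · rintro rfl
    exact Finset.mem_image.2 ⟨fun i => w[(i : ℕ)], Finset.mem_univ _, List.ofFn_getElem⟩

lemma mem_DelSet_iff {w : List Step} {m n l : ℕ} :
    w ∈ DelSet m n l ↔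
      w.length = l ∧ w.count E + w.count D = m ∧ w.count N + w.count D = n := by
  rw [DelSet, Finset.mem_filter, mem_Words_iff]

lemma depth_length_neg_of_mem_DelSet {w : List Step} {m n l : ℕ} (hw : w ∈ DelSet m n l)
    (hnm : n < m) : depth w w.length < 0 := by
  rw [mem_DelSet_iff] at hw
  rw [depth_length]
  omega

lemma set_mem_DelSet {w : List Step} {m n l k : ℕ} (hw : w ∈ DelSet (m + 1) n l)
    (hk : k < w.length) (hE : w[k] = E) : w.set k N ∈ DelSet m (n + 1) l := by
  have hpos : 0 < w.count E := List.count_pos_iff.2 (hE ▸ List.getElem_mem hk)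
  rw [mem_DelSet_iff] at hw ⊢
  simp only [List.length_set, List.count_set hk, hE, BEq.rfl, ↓reduceIte, beq_iff_eq, reduceCtorEq,
    add_zero, tsub_zero]
  omega

/-- for W ∈ Del(n+1,n-1,l), the step just after the last deepest
point is an E; replacing it with N gives a bad path in Del(n,n,l); and this is
inverse to the map replacing the first deepest step of a bad path with E. -/
theorem phiInv_inverse (n l : ℕ) (hn : 1 ≤ n) :
    (∀ w ∈ DelSet (n + 1) (n - 1) l,
        w.getD (lastDeep w) E = E ∧ phiInv w ∈ BDelSet n l) ∧
      (∀ w ∈ BDelSet n l, phiInv (phi w) = w) ∧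
      (∀ w ∈ DelSet (n + 1) (n - 1) l, phi (phiInv w) = w) := by
  have lastDeep_lt {w} (hw : w ∈ DelSet (n + 1) (n - 1) l) : lastDeep w < w.length :=
    lastDeep_lt_length (depth_length_neg_of_mem_DelSet hw (by omega))
  refine ⟨fun w hw => ⟨?_, ?_⟩, fun w hw => ?_, fun w hw => phi_phiInv (lastDeep_lt hw)⟩
  · rw [List.getD_eq_getElem _ _ (lastDeep_lt hw), getElem_lastDeep]
  · have hset := set_mem_DelSet hw (lastDeep_lt hw) (getElem_lastDeep _)
    rw [Nat.sub_add_cancel hn] at hset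
    refine Finset.mem_filter.2 ⟨hset, bad_iff_firstDeep_pos.2 ?_⟩
    rw [phiInv, firstDeep_set_lastDeep rfl (lastDeep_lt hw)]
    exact Nat.succ_pos _
  · exact phiInv_phi (bad_iff_firstDeep_pos.1 (Finset.mem_filter.1 hw).2)
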